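/- Let f, g : ℝⁿ → ℝ be quadratic forms. Then f is strictly copositive with g (i.e., g(x) ≥ 0 and x ≠ 0 imply f(x) > 0) if and only if there exists ξ > 0 such that f(x) − ξ·g(x) > 0 for all nonzero x ∈ ℝⁿ. -/

import Mathlib

/-!
On the unit sphere `S`, the points where `f ≤ 0` form a compact set on which `g < 0`, so
`α = max (f / g)` over it exists and is `≥ 0`. The two-dimensional core of the S-lemma says
that `f x / g x < f y / g y` whenever `g x < 0 < g y`: otherwise a suitable combination of `f`
and `g` vanishes at `y`, is `≤ 0` at `x`, and so is `≤ 0` at one of the two zeros of `g` on the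
line `ℝ • x + y`, contradicting copositivity. Hence `f - α g ≥ 0` on `S`, strictly where
`g ≥ 0`, and compactness lets us increase `α` by some `δ > 0`.
-/

open QuadraticMap Metric

def StrictlyCopositiveWith {V : Type*} [Zero V] (f g : V → ℝ) : Prop :=
  ∀ x, 0 ≤ g x → x ≠ 0 → 0 < f x

lemma exists_pos_quadratic_root_of_neg_of_pos {a c : ℝ} (b : ℝ) (ha : a < 0) (hc : 0 < c) :
    ∃ s > 0, a * (s * s) + b * s + c = 0 := by
  have hD : 0 ≤ discrim a b c := by unfold discrim; nlinarith [mul_self_nonneg b]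
  set r := √(discrim a b c)
  have hbr : |b| < r := by
    rw [Real.lt_sqrt (abs_nonneg b), sq_abs, discrim]
    nlinarith
  refine ⟨(-b - r) / (2 * a),
    div_pos_of_neg_of_neg (by linarith [neg_le_abs b]) (by linarith), ?_⟩
  exact (quadratic_eq_zero_iff ha.ne (Real.mul_self_sqrt hD).symm _).2 (Or.inr rfl)

lemma exists_quadratic_root_mul_nonpos {a c : ℝ} (b d : ℝ) (ha : a < 0) (hc : 0 < c) :
    ∃ s, a * (s * s) + b * s + c = 0 ∧ s * d ≤ 0 := by
  rcases le_or_gt d 0 with hd | hd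
  · obtain ⟨s, hs, hroot⟩ := exists_pos_quadratic_root_of_neg_of_pos b ha hc
    exact ⟨s, hroot, mul_nonpos_of_nonneg_of_nonpos hs.le hd⟩
  · obtain ⟨s, hs, hroot⟩ := exists_pos_quadratic_root_of_neg_of_pos (-b) ha hc
    exact ⟨-s, by linear_combination hroot, by nlinarith⟩

lemma QuadraticMap.map_smul_add {R M N : Type*} [CommRing R] [AddCommGroup M] [AddCommGroup N]
    [Module R M] [Module R N] (Q : QuadraticMap R M N) (a : R) (x y : M) :
    Q (a • x + y) = (a * a) • Q x + a • polar Q x y + Q y := by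
  rw [QuadraticMap.map_add Q, Q.map_smul, polar_smul_left]
  abel

lemma QuadraticForm.pos_of_forall_mem_sphere_pos {V : Type*} [NormedAddCommGroup V]
    [NormedSpace ℝ V] (Q : QuadraticForm ℝ V) (h : ∀ u ∈ sphere (0 : V) 1, 0 < Q u) {x : V}
    (hx : x ≠ 0) : 0 < Q x := by
  have hr : ‖x‖ ≠ 0 := norm_ne_zero_iff.2 hx
  have hu : ‖x‖⁻¹ • x ∈ sphere (0 : V) 1 := by simp [norm_smul, hr]
  calc 0 < (‖x‖ * ‖x‖) * Q (‖x‖⁻¹ • x) := mul_pos (mul_self_pos.2 hr) (h _ hu)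
    _ = Q x := by rw [← smul_eq_mul, ← Q.map_smul, smul_inv_smul₀ hr]

theorem IsCompact.exists_pos_sub_mul_pos {X : Type*} [TopologicalSpace X] {s : Set X}
    (hs : IsCompact s) {h g : X → ℝ} (hh : Continuous h) (hg : Continuous g)
    (hnonneg : ∀ x ∈ s, 0 ≤ h x) (hpos : ∀ x ∈ s, 0 ≤ g x → 0 < h x) :
    ∃ δ > 0, ∀ x ∈ s, 0 < h x - δ * g x := by
  have hK : IsCompact (s ∩ {x | 0 ≤ g x}) := hs.inter_right (isClosed_le continuous_const hg)
  have hg1 : ∀ x ∈ s ∩ {x | 0 ≤ g x}, 0 < g x + 1 := fun x hx => by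
    have : 0 ≤ g x := hx.2
    linarith
  obtain ⟨δ, hδ, hδle⟩ := hK.exists_forall_le' (a := 0)
    (hh.continuousOn.div (hg.continuousOn.add continuousOn_const) fun x hx => (hg1 x hx).ne')
    fun x hx => div_pos (hpos x hx.1 hx.2) (hg1 x hx)
  refine ⟨δ, hδ, fun x hx => ?_⟩
  rcases lt_or_ge (g x) 0 with hgx | hgx
  · nlinarith [hnonneg x hx]
  · have hδx : δ ≤ h x / (g x + 1) := hδle x ⟨hx, hgx⟩
    rw [le_div_iff₀ (hg1 x ⟨hx, hgx⟩)] at hδx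
    linarith

namespace StrictlyCopositiveWith

variable {V : Type*} [AddCommGroup V] [Module ℝ V] {f g : QuadraticForm ℝ V}

theorem mul_lt_mul_of_neg_of_pos (hfg : StrictlyCopositiveWith f g) {x y : V} (hx : g x < 0)
    (hy : 0 < g y) : f y * g x < f x * g y := by
  by_contra! hle
  set q : QuadraticForm ℝ V := g y • f - f y • g
  have hq : ∀ z, q z = g y * f z - f y * g z := fun z => rfl
  have hqy : q y = 0 := by rw [hq]; ring
  have hqx : q x ≤ 0 := by rw [hq]; linarith
  obtain ⟨s, hroot, hs⟩ := exists_quadratic_root_mul_nonpos (polar g x y) (polar q x y) hx hy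
  have hgz : g (s • x + y) = 0 := by
    rw [map_smul_add, smul_eq_mul, smul_eq_mul]
    linear_combination hroot
  have hz : s • x + y ≠ 0 := by
    intro h
    have hgy : g y = s * s * g x := by
      rw [eq_neg_of_add_eq_zero_right h, QuadraticMap.map_neg, g.map_smul, smul_eq_mul]
    nlinarith [mul_self_nonneg s]
  have hqz : q (s • x + y) ≤ 0 := by
    simp only [map_smul_add, hqy, smul_eq_mul]
    nlinarith [mul_self_nonneg s]
  have hfz : q (s • x + y) = g y * f (s • x + y) := by rw [hq, hgz, mul_zero, sub_zero]
  nlinarith [hfg _ hgz.ge hz]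

variable [TopologicalSpace V]

theorem exists_sub_mul_nonneg_and_pos (hfg : StrictlyCopositiveWith f g) (hf : Continuous f)
    (hg : Continuous g) {S : Set V} (hS : IsCompact S) (h0 : (0 : V) ∉ S) :
    ∃ α ≥ 0, (∀ x ∈ S, 0 ≤ f x - α * g x) ∧ ∀ x ∈ S, 0 ≤ g x → 0 < f x - α * g x := by
  set T := S ∩ {x | f x ≤ 0}
  have hT : IsCompact T := hS.inter_right (isClosed_le hf continuous_const)
  have hgT : ∀ x ∈ T, g x < 0 := fun x hx => by
    by_contra! h
    exact (hx.2 : f x ≤ 0).not_gt (hfg x h (ne_of_mem_of_not_mem hx.1 h0))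
  rcases T.eq_empty_or_nonempty with hTe | hTne
  · have hfS : ∀ x ∈ S, 0 < f x := fun x hx => by
      by_contra! h
      exact hTe.subset ⟨hx, h⟩
    exact ⟨0, le_rfl, fun x hx => by simp [(hfS x hx).le],
      fun x hx _ => by simp [hfS x hx]⟩
  obtain ⟨x₀, hx₀, hmax⟩ := hT.exists_isMaxOn hTne
    (hf.continuousOn.div hg.continuousOn fun x hx => (hgT x hx).ne)
  have hgx₀ := hgT x₀ hx₀
  set α := f x₀ / g x₀
  have hα : 0 ≤ α := div_nonneg_of_nonpos hx₀.2 hgx₀.le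
  have hstrict : ∀ x ∈ S, 0 ≤ g x → 0 < f x - α * g x := fun x hx hgx => by
    rcases hgx.lt_or_eq with hgx | hgx
    · have := hfg.mul_lt_mul_of_neg_of_pos hgx₀ hgx
      rw [div_mul_eq_mul_div, sub_pos, div_lt_iff_of_neg hgx₀]
      linarith
    · rw [← hgx, mul_zero, sub_zero]
      exact hfg x hgx.le (ne_of_mem_of_not_mem hx h0)
  refine ⟨α, hα, fun x hx => ?_, hstrict⟩
  rcases le_or_gt 0 (g x) with hgx | hgx
  · exact (hstrict x hx hgx).le
  rcases le_or_gt (f x) 0 with hfx | hfx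
  · have hx_le : f x / g x ≤ α := hmax ⟨hx, hfx⟩
    rw [div_le_iff_of_neg hgx] at hx_le
    linarith
  · nlinarith

end StrictlyCopositiveWith

theorem QuadraticForm.strictlyCopositiveWith_iff {V : Type*} [NormedAddCommGroup V]
    [NormedSpace ℝ V] [ProperSpace V] {f g : QuadraticForm ℝ V} (hf : Continuous f)
    (hg : Continuous g) :
    StrictlyCopositiveWith f g ↔ ∃ ξ > 0, ∀ x ≠ 0, 0 < f x - ξ * g x := by
  refine ⟨fun hfg => ?_,
    fun ⟨ξ, hξ, h⟩ x hgx hx => by nlinarith [h x hx, mul_nonneg hξ.le hgx]⟩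
  have hS : IsCompact (sphere (0 : V) 1) := isCompact_sphere 0 1
  obtain ⟨α, hα, hnonneg, hpos⟩ := hfg.exists_sub_mul_nonneg_and_pos hf hg hS (by simp)
  obtain ⟨δ, hδ, hδpos⟩ :=
    hS.exists_pos_sub_mul_pos (h := fun x => f x - α * g x) (by fun_prop) hg hnonneg hpos
  have hξ : ∀ x, (f - (α + δ) • g) x = f x - (α + δ) * g x := fun x => rfl
  refine ⟨α + δ, by positivity, fun x hx => ?_⟩
  rw [← hξ]
  exact (f - (α + δ) • g).pos_of_forall_mem_sphere_pos
    (fun u hu => by rw [hξ]; linarith [hδpos u hu]) hx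

lemma Matrix.toQuadraticForm'_apply {n : Type*} [Fintype n] [DecidableEq n]
    (A : Matrix n n ℝ) (x : n → ℝ) : A.toQuadraticForm' x = x ⬝ᵥ A.mulVec x :=
  Matrix.toLinearMap₂'_apply' A x x

lemma Matrix.continuous_toQuadraticForm' {n : Type*} [Fintype n] [DecidableEq n]
    (A : Matrix n n ℝ) : Continuous A.toQuadraticForm' := by
  simp only [funext A.toQuadraticForm'_apply, dotProduct, Matrix.mulVec]
  fun_prop

theorem strict_s_lemma_general (n : ℕ) (f g : (Fin n → ℝ) → ℝ)
    (A B : Matrix (Fin n) (Fin n) ℝ)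
    (hf : ∀ x, f x = dotProduct x (A.mulVec x))
    (hg : ∀ x, g x = dotProduct x (B.mulVec x)) :
    (∀ x : Fin n → ℝ, g x ≥ 0 → x ≠ 0 → f x > 0) ↔
      ∃ ξ : ℝ, ξ > 0 ∧ ∀ x : Fin n → ℝ, x ≠ 0 → f x - ξ * g x > 0 := by
  obtain rfl : f = A.toQuadraticForm' :=
    funext fun x => (hf x).trans (A.toQuadraticForm'_apply x).symm
  obtain rfl : g = B.toQuadraticForm' :=
    funext fun x => (hg x).trans (B.toQuadraticForm'_apply x).symm
  exact QuadraticForm.strictlyCopositiveWith_iff A.continuous_toQuadraticForm'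
    B.continuous_toQuadraticForm'

theorem strict_s_lemma (n : ℕ) (f g : (Fin n → ℝ) → ℝ)
    (A B : Matrix (Fin n) (Fin n) ℝ) (hA : A.IsSymm) (hB : B.IsSymm)
    (hf : ∀ x, f x = dotProduct x (A.mulVec x))
    (hg : ∀ x, g x = dotProduct x (B.mulVec x)) :
    (∀ x : Fin n → ℝ, g x ≥ 0 → x ≠ 0 → f x > 0) ↔
      ∃ ξ : ℝ, ξ > 0 ∧ ∀ x : Fin n → ℝ, x ≠ 0 → f x - ξ * g x > 0 :=
  strict_s_lemma_general n f g A B hf hg
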